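/- arXiv:1811.06829 — 4 statements merged into one kernel-verified Lean document; each statement's English description precedes it below -/
import Mathlib

section
/- Let q be an odd prime power, m > 3, 2 ≤ k ≤ m-2, and α_1,...,α_k ∈ F_q^*. Define f : F_q^m \ {0} → F_q by f(x) = α_i if the weight of x equals i ≤ k, and f(x) = 0 if the weight of x exceeds k. Then the code C_f = {(u·f(x) + v·x)_{x ∈ F_q^m \ {0}} : u ∈ F_q, v ∈ F_q^m} is a linear code of length q^m - 1 and dimension m + 1 over F_q. -/
/-- The function f of the paper: f(x) = α_{w(x)} if w(x) ≤ k, and 0 otherwise,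
where w(x) is the number of nonzero coordinates of x. -/
def fDH {F : Type*} [Field F] [DecidableEq F] {m : ℕ} (k : ℕ) (α : ℕ → F)
    (x : Fin m → F) : F :=
  if (Finset.univ.filter fun j => x j ≠ 0).card ≤ k then
    α ((Finset.univ.filter fun j => x j ≠ 0).card)
  else 0

lemma fDH_single {F : Type*} [Field F] [DecidableEq F] {m : ℕ} (k : ℕ) (hk : 1 ≤ k)
    (α : ℕ → F) (i : Fin m) (c : F) (hc : c ≠ 0) :
    fDH k α (Pi.single i c : Fin m → F) = α 1 := by
  have hfilt : (Finset.univ.filter fun j => (Pi.single i c : Fin m → F) j ≠ 0) = {i} := by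
    ext j
    simp only [Finset.mem_filter, Finset.mem_univ, true_and, Finset.mem_singleton,
      Pi.single_apply]
    by_cases h : j = i <;> simp [h, hc]
  simp [fDH, hfilt, hk]

lemma sum_single' {F : Type*} [Field F] [DecidableEq F] {m : ℕ}
    (v : Fin m → F) (i : Fin m) (c : F) :
    ∑ j, v j * (Pi.single i c : Fin m → F) j = v i * c := by
  rw [Finset.sum_eq_single i]
  · simp
  · intro b _ hb; simp [Pi.single_apply, hb]
  · simp

/-- The code C_f, the image of the linear map
(u,v) ↦ (u f(x) + v·x)_{x ∈ F^m \ {0}}, has length q^m - 1 and dimension m + 1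
(the map is injective). -/
theorem stmt4 {F : Type*} [Field F] [Fintype F] [DecidableEq F] (q m k : ℕ)
    (hq : Fintype.card F = q) (hodd : Odd q) (hm : 3 < m) (hk1 : 2 ≤ k) (hk2 : k ≤ m - 2)
    (α : ℕ → F) (hα : ∀ i, 1 ≤ i → i ≤ k → α i ≠ 0) :
    Nat.card {x : Fin m → F // x ≠ 0} = q ^ m - 1 ∧
    Function.Injective (fun (p : F × (Fin m → F)) =>
      fun (x : {x : Fin m → F // x ≠ 0}) =>
        p.1 * fDH k α x.val + ∑ j, p.2 j * x.val j) := by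
  constructor
  · rw [Nat.card_eq_fintype_card]
    have : Fintype.card {x : Fin m → F // x ≠ 0} = Fintype.card (Fin m → F) - 1 := by
      rw [Fintype.card_subtype_compl]
      simp
    rw [this]
    simp [hq]
  · -- find c ≠ 0, c ≠ 1
    have h2 : 2 ≤ Fintype.card F := Fintype.one_lt_card
    have hq3 : 3 ≤ Fintype.card F := by
      rcases hodd with ⟨t, ht⟩; omega
    have hcard01 : ({0, 1} : Finset F).card ≤ 2 :=
      le_trans (Finset.card_insert_le _ _) (by simp)
    have hne : (({0, 1} : Finset F)ᶜ).Nonempty := by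
      rw [← Finset.card_pos, Finset.card_compl]
      omega
    obtain ⟨c, hc⟩ := hne
    simp only [Finset.mem_compl, Finset.mem_insert, Finset.mem_singleton, not_or] at hc
    obtain ⟨hc0, hc1⟩ := hc
    have hα1 : α 1 ≠ 0 := hα 1 le_rfl (by omega)
    rintro ⟨u1, v1⟩ ⟨u2, v2⟩ h
    simp only at h
    have key : ∀ (i : Fin m) (d : F), d ≠ 0 →
        u1 * α 1 + v1 i * d = u2 * α 1 + v2 i * d := by
      intro i d hd
      have hne0 : (Pi.single i d : Fin m → F) ≠ 0 := by
        intro h0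
        have := congrFun h0 i
        simp [hd] at this
      have := congrFun h ⟨Pi.single i d, hne0⟩
      simpa [fDH_single k (by omega) α i d hd, sum_single'] using this
    have hv : ∀ i, v1 i = v2 i := by
      intro i
      have h1 := key i 1 one_ne_zero
      have h2' := key i c hc0
      have heq : v1 i * (1 - c) = v2 i * (1 - c) := by linear_combination h1 - h2'
      have hne' : (1 : F) - c ≠ 0 := sub_ne_zero.mpr (Ne.symm hc1)
      exact mul_right_cancel₀ hne' heq
    have hu : u1 = u2 := by
      have h1 := key ⟨0, by omega⟩ 1 one_ne_zero
      rw [hv ⟨0, by omega⟩] at h1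
      have heq : u1 * α 1 = u2 * α 1 := by linear_combination h1
      exact mul_right_cancel₀ hα1 heq
    simp only [Prod.mk.injEq]
    exact ⟨hu, funext hv⟩
end

section
/- Let q be an odd prime power, m > 3, 2 ≤ k ≤ m-2, and let c(u,v) with u ≠ 0 and v ≠ 0 be a codeword of C_f. Then the number of zero entries of c(u,v) is at most Σ_{i=1}^{m-1} C(m-1,i)(q-1)^i + Σ_{i=1}^{k} C(m-1,i)(q-1)^i, and at least Σ_{i=k+1}^{m-1} C(m-1,i)(q-1)^i. -/
/-! Fix a coordinate `j₀` with `v j₀ ≠ 0` and split `x = y + t e_{j₀}` with `y j₀ = 0`. Since `f`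
depends only on the weight, and the weight of `x` is `w(y)` or `w(y) + 1` according as `t = 0`
or not, for fixed `y` the equation `c(u,v)_x = 0` is affine in `t ≠ 0` with slope `v j₀ ≠ 0`.

Lower bound: each `y` of weight `> k` gives exactly one zero, since `f` vanishes there.
Upper bound: the zeros with `t ≠ 0` inject into `A = {y : w(y) > k → v·y ≠ 0}` and the zeros
with `t = 0` form `B = {y : c(u,v)_y = 0}`. The points of `A ∩ B` have weight in `[1, k]`, and
some `y₀` of weight `k` with `u α_k + v·y₀ ≠ 0` is not among them (if `y₀` fails, `λ y₀` with
`λ ∉ {0, 1}` works, which is where `q ≥ 3` enters). So the number of zeros is at most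
`|A| + |B| = |A ∪ B| + |A ∩ B| < q^(m-1) + |{y : 1 ≤ w(y) ≤ k}|`.
-/

open Finset Function

section Hamming

variable {ι β : Type*} [Fintype ι] [DecidableEq ι] [DecidableEq β] [Zero β]

lemma hammingNorm_update_zero_le (x : ι → β) (j : ι) :
    hammingNorm (update x j 0) ≤ hammingNorm x :=
  card_le_card fun i hi => by
    by_cases hij : i = j
    · subst hij; simp at hi
    · simpa [update_of_ne hij] using hi

lemma hammingNorm_eq_update_zero_add_one {x : ι → β} {j : ι} (hx : x j ≠ 0) :
    hammingNorm x = hammingNorm (update x j 0) + 1 := by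
  have hsupp : univ.filter (fun i => x i ≠ 0) =
      insert j (univ.filter fun i => update x j 0 i ≠ 0) := by
    ext i
    by_cases hij : i = j
    · subst hij; simp [hx]
    · simp [hij]
  rw [hammingNorm, hsupp, card_insert_of_notMem (by simp)]
  rfl

lemma hammingNorm_le_of_apply_eq_zero {x : ι → β} {j₀ : ι} (hx : x j₀ = 0) :
    hammingNorm x ≤ Fintype.card ι - 1 := by
  calc hammingNorm x ≤ #(univ.erase j₀) :=
        card_le_card fun j hj => mem_erase.2 ⟨by rintro rfl; simp_all, mem_univ _⟩
    _ = Fintype.card ι - 1 := by rw [card_erase_of_mem (mem_univ _), card_univ]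

variable [Fintype β]

lemma card_filter_support_eq (t : Finset ι) :
    #{x : ι → β | ({j | x j ≠ 0} : Finset ι) = t} = (Fintype.card β - 1) ^ #t := by
  have hpi : ({x | ({j | x j ≠ 0} : Finset ι) = t} : Finset (ι → β)) =
      Fintype.piFinset fun j => if j ∈ t then univ.erase 0 else {0} := by
    ext x
    simp only [mem_filter, mem_univ, true_and, Fintype.mem_piFinset, Finset.ext_iff]
    refine forall_congr' fun j => ?_
    by_cases hj : j ∈ t <;> simp [hj]
  rw [hpi, Fintype.card_piFinset]
  simp [apply_ite card, card_erase_of_mem, prod_ite_mem]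

lemma card_filter_hammingNorm_eq_of_subset (s : Finset ι) (i : ℕ) :
    #{x : ι → β | (∀ j ∉ s, x j = 0) ∧ hammingNorm x = i} =
      (#s).choose i * (Fintype.card β - 1) ^ i := by
  rw [card_eq_sum_card_fiberwise (f := fun x : ι → β => ({j | x j ≠ 0} : Finset ι))
    (t := s.powersetCard i)]
  · rw [sum_congr rfl (g := fun _ => (Fintype.card β - 1) ^ i), sum_const, card_powersetCard,
      smul_eq_mul]
    intro t ht
    obtain ⟨hts, rfl⟩ := mem_powersetCard.1 ht
    rw [← card_filter_support_eq t, filter_filter]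
    congr 1
    refine filter_congr fun x _ => ⟨And.right, fun hx => ⟨⟨fun j hj => ?_, by
      rw [hammingNorm, hx]⟩, hx⟩⟩
    by_contra hxj
    exact hj (hts (hx ▸ by simpa using hxj))
  · intro x hx
    rw [mem_coe, mem_filter] at hx
    rw [mem_coe, mem_powersetCard]
    refine ⟨fun j hj => ?_, hx.2.2⟩
    by_contra hjs
    simp [hx.2.1 j hjs] at hj

lemma card_filter_apply_eq_zero_hammingNorm_mem (j₀ : ι) (T : Finset ℕ) :
    #{x : ι → β | x j₀ = 0 ∧ hammingNorm x ∈ T} =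
      ∑ i ∈ T, (Fintype.card ι - 1).choose i * (Fintype.card β - 1) ^ i := by
  rw [card_eq_sum_card_fiberwise (f := hammingNorm) (t := T)
    (fun x hx => (mem_filter.1 (mem_coe.1 hx)).2.2)]
  refine sum_congr rfl fun i hi => ?_
  have hcard : Fintype.card ι - 1 = #(univ.erase j₀) := by
    rw [card_erase_of_mem (mem_univ _), card_univ]
  rw [hcard, ← card_filter_hammingNorm_eq_of_subset, filter_filter]
  congr 1
  refine filter_congr fun x _ => ?_
  simp only [mem_erase, ne_eq, mem_univ, and_true, not_not, forall_eq]
  exact ⟨fun h => ⟨h.1.1, h.2⟩, fun h => ⟨⟨h.1, h.2 ▸ hi⟩, h.2⟩⟩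

lemma card_filter_apply_eq_zero (j₀ : ι) :
    #{x : ι → β | x j₀ = 0} = 1 + ∑ i ∈ Icc 1 (Fintype.card ι - 1),
      (Fintype.card ι - 1).choose i * (Fintype.card β - 1) ^ i := by
  have hall : ({x | x j₀ = 0} : Finset (ι → β)) =
      ({x | x j₀ = 0 ∧ hammingNorm x ∈ Icc 0 (Fintype.card ι - 1)} : Finset (ι → β)) :=
    filter_congr fun x _ =>
      ⟨fun hx => ⟨hx, mem_Icc.2 ⟨Nat.zero_le _, hammingNorm_le_of_apply_eq_zero hx⟩⟩, And.left⟩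
  rw [hall, card_filter_apply_eq_zero_hammingNorm_mem,
    ← insert_Icc_add_one_left_eq_Icc (Nat.zero_le _), sum_insert (by simp)]
  simp

end Hamming

lemma dotProduct_eq_update_zero_add {ι R : Type*} [Fintype ι] [DecidableEq ι]
    [NonUnitalNonAssocSemiring R] (v x : ι → R) (j : ι) :
    v ⬝ᵥ x = v ⬝ᵥ update x j 0 + v j * x j := by
  rw [← dotProduct_single, ← dotProduct_add]
  congr 1
  ext i
  by_cases hij : i = j
  · subst hij; simp
  · simp [hij]

section ZeroEntries

variable {ι F : Type*} [Fintype ι] [DecidableEq ι] [Field F] [Fintype F] [DecidableEq F]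

-- `c(u,v)` is the word `x ↦ φ (hammingNorm x) + v ⬝ᵥ x` with `φ i = u * α i` for `i ≤ k`
-- and `φ i = 0` beyond.
def zeroEntries (φ : ℕ → F) (v : ι → F) : Finset (ι → F) :=
  {x | x ≠ 0 ∧ φ (hammingNorm x) + v ⬝ᵥ x = 0}

variable {φ : ℕ → F} {v : ι → F} {k : ℕ} {j₀ : ι}

@[simp]
lemma mem_zeroEntries {x : ι → F} :
    x ∈ zeroEntries φ v ↔ x ≠ 0 ∧ φ (hammingNorm x) + v ⬝ᵥ x = 0 := by
  simp [zeroEntries]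

lemma card_le_card_zeroEntries (hφ : ∀ i, k < i → φ i = 0) (hj₀ : v j₀ ≠ 0) (T : Finset ℕ)
    (hT : ∀ i ∈ T, k < i) :
    #{y : ι → F | y j₀ = 0 ∧ hammingNorm y ∈ T} ≤ #(zeroEntries φ v) := by
  refine card_le_card_of_injOn (fun y => update y j₀ (-(v ⬝ᵥ y) / v j₀)) (fun y hy => ?_)
    (fun y₁ hy₁ y₂ hy₂ h => ?_)
  · obtain ⟨hy₀, hyT⟩ := (mem_filter.1 (mem_coe.1 hy)).2
    set x := update y j₀ (-(v ⬝ᵥ y) / v j₀)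
    have hxy : update x j₀ 0 = y := by rw [update_idem, update_eq_self_iff.2 hy₀.symm]
    have hkx : k < hammingNorm x := (hT _ hyT).trans_le (hxy ▸ hammingNorm_update_zero_le x j₀)
    refine mem_coe.2 (mem_filter.2 ⟨mem_univ _, hammingNorm_pos_iff.1 (Nat.zero_lt_of_lt hkx), ?_⟩)
    rw [hφ _ hkx, dotProduct_eq_update_zero_add v x j₀, hxy, zero_add,
      show x j₀ = -(v ⬝ᵥ y) / v j₀ from update_self .., mul_div_cancel₀ _ hj₀, add_neg_cancel]
  · have e₁ : update y₁ j₀ 0 = y₁ :=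
      update_eq_self_iff.2 (mem_filter.1 (mem_coe.1 hy₁)).2.1.symm
    have e₂ : update y₂ j₀ 0 = y₂ :=
      update_eq_self_iff.2 (mem_filter.1 (mem_coe.1 hy₂)).2.1.symm
    simpa only [update_idem, e₁, e₂] using congrArg (update · j₀ 0) h

lemma exists_hammingNorm_eq_add_dotProduct_ne_zero (hF : 2 < Fintype.card F) {k : ℕ}
    (hk : k < Fintype.card ι) {c : F} (hc : c ≠ 0) (v : ι → F) (j₀ : ι) :
    ∃ y : ι → F, y j₀ = 0 ∧ hammingNorm y = k ∧ c + v ⬝ᵥ y ≠ 0 := by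
  obtain ⟨y, hy⟩ :
      ({y | y j₀ = 0 ∧ hammingNorm y ∈ ({k} : Finset ℕ)} : Finset (ι → F)).Nonempty := by
    rw [← card_pos, card_filter_apply_eq_zero_hammingNorm_mem, sum_singleton]
    exact mul_pos (Nat.choose_pos (by omega)) (pow_pos (by omega) _)
  obtain ⟨hy₀, hyk⟩ : y j₀ = 0 ∧ hammingNorm y = k := by simpa using hy
  by_cases hcy : c + v ⬝ᵥ y = 0
  · obtain ⟨l, -, hl⟩ := exists_mem_notMem_of_card_lt_card (s := ({0, 1} : Finset F))
      (t := univ) (card_le_two.trans_lt hF)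
    simp only [mem_insert, mem_singleton, not_or] at hl
    refine ⟨l • y, by simp [hy₀], by rw [hammingNorm_smul (fun _ => .of_ne_zero hl.1), hyk], ?_⟩
    rw [dotProduct_smul, smul_eq_mul]
    intro hcl
    have : (1 - l) * c = 0 := by linear_combination hcl - l * hcy
    exact mul_ne_zero (sub_ne_zero.2 (Ne.symm hl.2)) hc this
  · exact ⟨y, hy₀, hyk, hcy⟩

lemma add_dotProduct_update_zero_add_mul_eq_zero {x : ι → F} (hx : x ∈ zeroEntries φ v)
    (hx₀ : x j₀ ≠ 0) :
    φ (hammingNorm (update x j₀ 0) + 1) + v ⬝ᵥ update x j₀ 0 + v j₀ * x j₀ = 0 := by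
  rw [add_assoc, ← dotProduct_eq_update_zero_add, ← hammingNorm_eq_update_zero_add_one hx₀]
  exact (mem_zeroEntries.1 hx).2

lemma card_filter_zeroEntries_apply_ne_zero_le (hφ : ∀ i, k < i → φ i = 0) (hj₀ : v j₀ ≠ 0) :
    #{x ∈ zeroEntries φ v | x j₀ ≠ 0} ≤
      #{y : ι → F | y j₀ = 0 ∧ (k < hammingNorm y → v ⬝ᵥ y ≠ 0)} := by
  refine card_le_card_of_injOn (update · j₀ 0) (fun x hx => ?_) (fun x₁ hx₁ x₂ hx₂ h => ?_)
  · obtain ⟨hxZ, hx₀⟩ := mem_filter.1 (mem_coe.1 hx)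
    refine mem_coe.2 (mem_filter.2 ⟨mem_univ _, update_self .., fun hk hvy => ?_⟩)
    have := add_dotProduct_update_zero_add_mul_eq_zero hxZ hx₀
    rw [hφ _ (Nat.lt_succ_of_lt hk), hvy, zero_add, zero_add] at this
    exact mul_ne_zero hj₀ hx₀ this
  · obtain ⟨hx₁Z, hx₁₀⟩ := mem_filter.1 (mem_coe.1 hx₁)
    obtain ⟨hx₂Z, hx₂₀⟩ := mem_filter.1 (mem_coe.1 hx₂)
    have e₁ := add_dotProduct_update_zero_add_mul_eq_zero hx₁Z hx₁₀
    have e₂ := add_dotProduct_update_zero_add_mul_eq_zero hx₂Z hx₂₀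
    simp only at h
    rw [h] at e₁
    have hx₀ : x₁ j₀ = x₂ j₀ := mul_left_cancel₀ hj₀ (by linear_combination e₁ - e₂)
    calc x₁ = update (update x₁ j₀ 0) j₀ (x₁ j₀) := by rw [update_idem, update_eq_self]
      _ = update (update x₂ j₀ 0) j₀ (x₂ j₀) := by rw [h, hx₀]
      _ = x₂ := by rw [update_idem, update_eq_self]

lemma card_zeroEntries_lt (hφ : ∀ i, k < i → φ i = 0) (hφk : φ k ≠ 0) (hj₀ : v j₀ ≠ 0)
    (hk : 1 ≤ k) (hkι : k < Fintype.card ι) (hF : 2 < Fintype.card F) :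
    #(zeroEntries φ v) <
      #{y : ι → F | y j₀ = 0} + #{y : ι → F | y j₀ = 0 ∧ hammingNorm y ∈ Icc 1 k} := by
  set Z := zeroEntries φ v
  set A : Finset (ι → F) := {y | y j₀ = 0 ∧ (k < hammingNorm y → v ⬝ᵥ y ≠ 0)}
  set B := {x ∈ Z | x j₀ = 0}
  obtain ⟨y₀, hy₀, hy₀k, hy₀Z⟩ := exists_hammingNorm_eq_add_dotProduct_ne_zero hF hkι hφk v j₀
  have hZ : #Z ≤ #A + #B := by
    rw [← card_filter_add_card_filter_not (s := Z) (p := fun x => x j₀ = 0), add_comm]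
    exact Nat.add_le_add_right (card_filter_zeroEntries_apply_ne_zero_le hφ hj₀) _
  have hunion : A ∪ B ⊆ ({y | y j₀ = 0} : Finset (ι → F)) := by
    intro y hy
    rcases mem_union.1 hy with hyA | hyB
    · exact mem_filter.2 ⟨mem_univ _, (mem_filter.1 hyA).2.1⟩
    · exact mem_filter.2 ⟨mem_univ _, (mem_filter.1 hyB).2⟩
  have hinter : A ∩ B ⊂ ({y | y j₀ = 0 ∧ hammingNorm y ∈ Icc 1 k} : Finset (ι → F)) := by
    refine (ssubset_iff_of_subset fun y hy => ?_).2 ⟨y₀, ?_, fun hy => ?_⟩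
    · obtain ⟨hyA, hyB⟩ := mem_inter.1 hy
      obtain ⟨hyZ, hyj₀⟩ := mem_filter.1 hyB
      obtain ⟨hy0, hyφ⟩ := mem_zeroEntries.1 hyZ
      have hyk : hammingNorm y ≤ k := by
        by_contra! hky
        rw [hφ _ hky, zero_add] at hyφ
        exact (mem_filter.1 hyA).2.2 hky hyφ
      exact mem_filter.2 ⟨mem_univ _, hyj₀, mem_Icc.2 ⟨hammingNorm_pos_iff.2 hy0, hyk⟩⟩
    · exact mem_filter.2 ⟨mem_univ _, hy₀, mem_Icc.2 ⟨hy₀k ▸ hk, hy₀k.le⟩⟩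
    · have hyZ := (mem_filter.1 (mem_inter.1 hy).2).1
      exact hy₀Z (hy₀k ▸ (mem_zeroEntries.1 hyZ).2)
  calc #Z ≤ #A + #B := hZ
    _ = #(A ∪ B) + #(A ∩ B) := (card_union_add_card_inter A B).symm
    _ < _ := add_lt_add_of_le_of_lt (card_le_card hunion) (card_lt_card hinter)

end ZeroEntries

theorem stmt8_general {F : Type*} [Field F] [Fintype F] [DecidableEq F] (q m k : ℕ)
    (hq : Fintype.card F = q) (hodd : Odd q) (hk1 : 2 ≤ k) (hk2 : k ≤ m - 2)
    (α : ℕ → F) (hα : ∀ i, 1 ≤ i → i ≤ k → α i ≠ 0)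
    (u : F) (v : Fin m → F) (hu : u ≠ 0) (hv : v ≠ 0) :
    (∑ i ∈ Finset.Icc (k + 1) (m - 1), (m - 1).choose i * (q - 1) ^ i ≤
      Set.ncard {x : Fin m → F | x ≠ 0 ∧ u * fDH k α x + ∑ j, v j * x j = 0}) ∧
    (Set.ncard {x : Fin m → F | x ≠ 0 ∧ u * fDH k α x + ∑ j, v j * x j = 0} ≤
      ∑ i ∈ Finset.Icc 1 (m - 1), (m - 1).choose i * (q - 1) ^ i +
        ∑ i ∈ Finset.Icc 1 k, (m - 1).choose i * (q - 1) ^ i) := by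
  subst hq
  obtain ⟨j₀, hj₀⟩ := Function.ne_iff.mp hv
  set φ : ℕ → F := fun i => u * if i ≤ k then α i else 0
  have hZ : {x : Fin m → F | x ≠ 0 ∧ u * fDH k α x + ∑ j, v j * x j = 0} =
      ↑(zeroEntries φ v) := by
    ext x
    simp [φ, fDH, hammingNorm, dotProduct]
  have hφ : ∀ i, k < i → φ i = 0 := fun i hi => by simp [φ, hi.not_ge]
  have hφk : φ k ≠ 0 := by simpa [φ] using ⟨hu, hα k (by omega) le_rfl⟩
  have hF : 2 < Fintype.card F := by
    obtain ⟨r, hr⟩ := hodd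
    have := Fintype.one_lt_card (α := F)
    omega
  rw [hZ, Set.ncard_coe_finset]
  constructor
  · calc _ = #{y : Fin m → F | y j₀ = 0 ∧ hammingNorm y ∈ Icc (k + 1) (m - 1)} := by
          rw [card_filter_apply_eq_zero_hammingNorm_mem, Fintype.card_fin]
      _ ≤ _ := card_le_card_zeroEntries hφ hj₀ _ fun i hi => (mem_Icc.1 hi).1
  · have := card_zeroEntries_lt hφ hφk hj₀ (by omega) (by rw [Fintype.card_fin]; omega) hF
    rw [card_filter_apply_eq_zero, card_filter_apply_eq_zero_hammingNorm_mem, Fintype.card_fin]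
      at this
    omega

/-- For a codeword c(u,v) with u ≠ 0 and v ≠ 0, the number of zero entries
is at least Σ_{i=k+1}^{m-1} C(m-1,i)(q-1)^i and at most
Σ_{i=1}^{m-1} C(m-1,i)(q-1)^i + Σ_{i=1}^{k} C(m-1,i)(q-1)^i. -/
theorem stmt8 {F : Type*} [Field F] [Fintype F] [DecidableEq F] (q m k : ℕ)
    (hq : Fintype.card F = q) (hodd : Odd q) (hm : 3 < m) (hk1 : 2 ≤ k) (hk2 : k ≤ m - 2)
    (α : ℕ → F) (hα : ∀ i, 1 ≤ i → i ≤ k → α i ≠ 0)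
    (u : F) (v : Fin m → F) (hu : u ≠ 0) (hv : v ≠ 0) :
    (∑ i ∈ Finset.Icc (k + 1) (m - 1), (m - 1).choose i * (q - 1) ^ i ≤
      Set.ncard {x : Fin m → F | x ≠ 0 ∧ u * fDH k α x + ∑ j, v j * x j = 0}) ∧
    (Set.ncard {x : Fin m → F | x ≠ 0 ∧ u * fDH k α x + ∑ j, v j * x j = 0} ≤
      ∑ i ∈ Finset.Icc 1 (m - 1), (m - 1).choose i * (q - 1) ^ i +
        ∑ i ∈ Finset.Icc 1 k, (m - 1).choose i * (q - 1) ^ i) :=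
  stmt8_general q m k hq hodd hk1 hk2 α hα u v hu hv
end

section
/- If q ≥ 5, 2 < m ≤ q - 1, and 1 ≤ k ≤ (m-1)/2, then q^m - 1 - Σ_{i=1}^{m-1} C(m-1,i)(q-1)^i - Σ_{i=1}^{k} C(m-1,i)(q-1)^i ≥ Σ_{i=1}^{k} C(m,i)(q-1)^i. -/
/-!
Both partial sums are at most `2 (q-1)^{2k} ≤ 2 q^{m-1}` since `2k ≤ m - 1`, while the full
binomial sum equals `q^{m-1} - 1`; so the right-hand side is at least
`q^m - 3 q^{m-1} ≥ 2 q^{m-1}`, using `q ≥ 5`.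
-/

open Finset

theorem Nat.sum_Icc_one_choose_mul_pow (n a : ℕ) :
    ∑ i ∈ Icc 1 n, n.choose i * a ^ i = (a + 1) ^ n - 1 := by
  rw [add_pow, sum_range_succ', ← Ico_add_one_right_eq_Icc, sum_Ico_eq_sum_range]
  simp [add_comm 1, mul_comm]

theorem Nat.sum_range_pow_le_two_mul_pow {r : ℕ} (hr : 2 ≤ r) (k : ℕ) :
    ∑ i ∈ range (k + 1), r ^ i ≤ 2 * r ^ k := by
  induction k with
  | zero => simp
  | succ k ih =>
    rw [sum_range_succ, pow_succ]
    have := Nat.mul_le_mul_left (r ^ k) hr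
    linarith

theorem Nat.sum_Icc_one_choose_mul_pow_le {n a : ℕ} (ha : 2 ≤ a) (hn : n ≤ a) (k : ℕ) :
    ∑ i ∈ Icc 1 k, n.choose i * a ^ i ≤ 2 * a ^ (2 * k) := by
  have hterm (i : ℕ) : n.choose i * a ^ i ≤ (a ^ 2) ^ i :=
    calc n.choose i * a ^ i ≤ a ^ i * a ^ i :=
          Nat.mul_le_mul_right _ ((n.choose_le_pow i).trans (Nat.pow_le_pow_left hn i))
      _ = (a ^ 2) ^ i := by ring
  calc ∑ i ∈ Icc 1 k, n.choose i * a ^ i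
      ≤ ∑ i ∈ Icc 1 k, (a ^ 2) ^ i := sum_le_sum fun i _ ↦ hterm i
    _ ≤ ∑ i ∈ range (k + 1), (a ^ 2) ^ i :=
        sum_le_sum_of_subset fun i hi ↦ by simp only [mem_Icc, mem_range] at hi ⊢; omega
    _ ≤ 2 * a ^ (2 * k) := by
        rw [pow_mul]; exact Nat.sum_range_pow_le_two_mul_pow (by nlinarith) k

theorem stmt11_general (q m k : ℕ) (hq : 5 ≤ q) (hm1 : 2 < m) (hm2 : m ≤ q - 1)
    (hk2 : k ≤ (m - 1) / 2) :
    ∑ i ∈ Finset.Icc 1 k, m.choose i * (q - 1) ^ i ≤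
      q ^ m - 1 - ∑ i ∈ Finset.Icc 1 (m - 1), (m - 1).choose i * (q - 1) ^ i -
        ∑ i ∈ Finset.Icc 1 k, (m - 1).choose i * (q - 1) ^ i := by
  have hfull := Nat.sum_Icc_one_choose_mul_pow (m - 1) (q - 1)
  rw [Nat.sub_add_cancel (by omega)] at hfull
  have hS1 := Nat.sum_Icc_one_choose_mul_pow_le (n := m) (by omega) hm2 k
  have hS2 := Nat.sum_Icc_one_choose_mul_pow_le (n := m - 1) (a := q - 1) (by omega) (by omega) k
  have hpow : (q - 1) ^ (2 * k) ≤ q ^ (m - 1) :=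
    calc (q - 1) ^ (2 * k) ≤ (q - 1) ^ (m - 1) := Nat.pow_le_pow_right (by omega) (by omega)
      _ ≤ q ^ (m - 1) := Nat.pow_le_pow_left (by omega) (m - 1)
  have hqm : q ^ m = q * q ^ (m - 1) := by rw [← pow_succ', Nat.sub_add_cancel (by omega)]
  have h5 : 5 * q ^ (m - 1) ≤ q * q ^ (m - 1) := Nat.mul_le_mul_right _ hq
  have hpos : 1 ≤ q ^ (m - 1) := Nat.one_le_pow _ _ (by omega)
  omega

/-- If q ≥ 5, 2 < m ≤ q - 1 and 1 ≤ k ≤ (m-1)/2, then Condition (1) holds: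
q^m - 1 - Σ_{i=1}^{m-1} C(m-1,i)(q-1)^i - Σ_{i=1}^{k} C(m-1,i)(q-1)^i ≥
Σ_{i=1}^{k} C(m,i)(q-1)^i. -/
theorem stmt11 (q m k : ℕ) (hq : 5 ≤ q) (hm1 : 2 < m) (hm2 : m ≤ q - 1)
    (hk1 : 1 ≤ k) (hk2 : k ≤ (m - 1) / 2) :
    ∑ i ∈ Finset.Icc 1 k, m.choose i * (q - 1) ^ i ≤
      q ^ m - 1 - ∑ i ∈ Finset.Icc 1 (m - 1), (m - 1).choose i * (q - 1) ^ i -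
        ∑ i ∈ Finset.Icc 1 k, (m - 1).choose i * (q - 1) ^ i :=
  stmt11_general q m k hq hm1 hm2 hk2
end

section
/- If q ≥ 5, 2 < m ≤ q - 1, and 1 ≤ k ≤ (m-1)/2, then Σ_{i=1}^{k} C(m,i)(q-1)^{i-1} ≤ q^{m-1} - q^{m-2}. -/
/-!
Bound each term crudely: `C(m,i) (q-1)^(i-1) ≤ m^i q^(i-1) ≤ q^(2i-1)`. Since `2k - 1 ≤ m - 2`,
every term is at most `q^(m-2)`, and there are `k ≤ q - 1` of them, so the sum is at most
`(q - 1) q^(m-2) = q^(m-1) - q^(m-2)`.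
-/

namespace Nat

theorem choose_mul_sub_one_pow_le {m q : ℕ} (hmq : m ≤ q) (i : ℕ) :
    m.choose i * (q - 1) ^ (i - 1) ≤ q ^ (2 * i - 1) :=
  calc m.choose i * (q - 1) ^ (i - 1) ≤ m ^ i * q ^ (i - 1) :=
        Nat.mul_le_mul (Nat.choose_le_pow m i) (Nat.pow_le_pow_left (Nat.sub_le q 1) _)
    _ ≤ q ^ i * q ^ (i - 1) := Nat.mul_le_mul_right _ (Nat.pow_le_pow_left hmq i)
    _ = q ^ (2 * i - 1) := by rw [← pow_add]; congr 1; omega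

theorem sum_Icc_choose_mul_sub_one_pow_le {m q : ℕ} (hq : 0 < q) (hmq : m ≤ q) (k : ℕ) :
    ∑ i ∈ Finset.Icc 1 k, m.choose i * (q - 1) ^ (i - 1) ≤ k * q ^ (2 * k - 1) := by
  have hterm : ∀ i ∈ Finset.Icc 1 k, m.choose i * (q - 1) ^ (i - 1) ≤ q ^ (2 * k - 1) := by
    intro i hi
    have hik : i ≤ k := (Finset.mem_Icc.mp hi).2
    exact (choose_mul_sub_one_pow_le hmq i).trans (Nat.pow_le_pow_right hq (by omega))
  simpa using Finset.sum_le_card_nsmul _ _ _ hterm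

end Nat

theorem stmt12_general (q m k : ℕ) (hm2 : m ≤ q - 1) (hk2 : k ≤ (m - 1) / 2) :
    ∑ i ∈ Finset.Icc 1 k, m.choose i * (q - 1) ^ (i - 1) ≤ q ^ (m - 1) - q ^ (m - 2) := by
  rcases Nat.eq_zero_or_pos k with rfl | hk
  · simp
  calc ∑ i ∈ Finset.Icc 1 k, m.choose i * (q - 1) ^ (i - 1)
      ≤ k * q ^ (2 * k - 1) :=
        Nat.sum_Icc_choose_mul_sub_one_pow_le (by omega) (hm2.trans (Nat.sub_le q 1)) k
    _ ≤ (q - 1) * q ^ (m - 2) :=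
        Nat.mul_le_mul (by omega) (Nat.pow_le_pow_right (by omega) (by omega))
    _ = q ^ (m - 1) - q ^ (m - 2) := by
        rw [Nat.sub_one_mul, ← pow_succ', show m - 2 + 1 = m - 1 by omega]

/-- If q ≥ 5, 2 < m ≤ q - 1 and 1 ≤ k ≤ (m-1)/2, then Condition (2) holds:
Σ_{i=1}^{k} C(m,i)(q-1)^(i-1) ≤ q^(m-1) - q^(m-2). -/
theorem stmt12 (q m k : ℕ) (hq : 5 ≤ q) (hm1 : 2 < m) (hm2 : m ≤ q - 1)
    (hk1 : 1 ≤ k) (hk2 : k ≤ (m - 1) / 2) :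
    ∑ i ∈ Finset.Icc 1 k, m.choose i * (q - 1) ^ (i - 1) ≤ q ^ (m - 1) - q ^ (m - 2) :=
  stmt12_general q m k hm2 hk2
end
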